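/- For every connected graph G of order n with e(G) edges, the distance signless Laplacian spectral radius satisfies μ₁(D^Q(G)) ≥ 4(n − 1) − 4e(G)/n. -/

import Mathlib

/-!
Evaluating the Rayleigh quotient of the symmetric matrix `D^Q(G)` at the all-ones vector gives
`μ₁(D^Q(G)) ≥ 1ᵀ D^Q(G) 1 / n = 2 W(G) / n`, where `W(G) = ∑ᵤ ∑ᵥ d(u, v)`. In `W(G)` the `2 e(G)`
ordered pairs of adjacent vertices contribute `1` each, and every other ordered pair of distinct
vertices contributes at least `2`, so `W(G) ≥ 2 n (n - 1) - 2 e(G)`.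
-/

open scoped Classical
open Finset

/-- The distance matrix of a graph: the `(u,v)` entry is the graph distance between `u` and `v`. -/
noncomputable def distMatrix {n : ℕ} (G : SimpleGraph (Fin n)) : Matrix (Fin n) (Fin n) ℝ :=
  fun u v => (G.dist u v : ℝ)

/-- The largest (real) eigenvalue of a matrix, i.e. the spectral radius for matrices such as
distance matrices of connected graphs. -/
noncomputable def specMax {n : ℕ} (M : Matrix (Fin n) (Fin n) ℝ) : ℝ :=
  sSup {t : ℝ | ∃ x : Fin n → ℝ, x ≠ 0 ∧ M.mulVec x = t • x}

/-- The transmission of a vertex: the sum of the distances to all other vertices. -/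
noncomputable def transmission {n : ℕ} (G : SimpleGraph (Fin n)) (v : Fin n) : ℕ :=
  ∑ u, G.dist v u

/-- The distance signless Laplacian matrix `Tr(G) + D(G)`. -/
noncomputable def distSignlessLapMatrix {n : ℕ} (G : SimpleGraph (Fin n)) :
    Matrix (Fin n) (Fin n) ℝ :=
  Matrix.diagonal (fun v => (transmission G v : ℝ)) + distMatrix G

/-- The transmission `σ(G)` of a graph: the sum of distances over all unordered pairs. -/
noncomputable def transSigma {n : ℕ} (G : SimpleGraph (Fin n)) : ℝ :=
  (∑ v, (transmission G v : ℝ)) / 2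

/-- The sum of `h` over the edges incident with `v`. -/
noncomputable def incSum {n : ℕ} (G : SimpleGraph (Fin n)) (h : Sym2 (Fin n) → ℝ) (v : Fin n) :
    ℝ :=
  ∑ e ∈ Finset.univ.filter (fun e => e ∈ G.incidenceSet v), h e

/-- `h` is (the indicator function of) a fractional `[a,b]`-factor of `G`. -/
def IsFractionalABFactor {n : ℕ} (G : SimpleGraph (Fin n)) (a b : ℕ)
    (h : Sym2 (Fin n) → ℝ) : Prop :=
  (∀ e, 0 ≤ h e ∧ h e ≤ 1) ∧ (∀ e, e ∉ G.edgeSet → h e = 0) ∧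
    ∀ v, (a : ℝ) ≤ incSum G h v ∧ incSum G h v ≤ (b : ℝ)

/-- `G` has a fractional `[a,b]`-factor. -/
def HasFractionalABFactor {n : ℕ} (G : SimpleGraph (Fin n)) (a b : ℕ) : Prop :=
  ∃ h, IsFractionalABFactor G a b h

/-- `G` is a fractional `[a,b]`-deleted graph: `G - e` has a fractional `[a,b]`-factor
for every edge `e` of `G`. -/
def IsFractionalABDeleted {n : ℕ} (G : SimpleGraph (Fin n)) (a b : ℕ) : Prop :=
  ∀ e ∈ G.edgeSet, HasFractionalABFactor (G.deleteEdges {e}) a b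

/-- `G` has a `k`-factor: a spanning `k`-regular subgraph. -/
def HasKFactor {n : ℕ} (G : SimpleGraph (Fin n)) (k : ℕ) : Prop :=
  ∃ H : SimpleGraph (Fin n), H ≤ G ∧ ∀ v, H.degree v = k

/-- `G` is ID-factor-critical: for every independent set `I` whose size has the same parity
as `n`, the graph `G - I` has a perfect matching. -/
def IsIDFactorCritical {n : ℕ} (G : SimpleGraph (Fin n)) : Prop :=
  ∀ I : Finset (Fin n), (∀ u ∈ I, ∀ v ∈ I, ¬ G.Adj u v) → I.card % 2 = n % 2 →
    ∃ M : (G.induce ((I : Set (Fin n))ᶜ)).Subgraph, M.IsPerfectMatching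

/-- The graph `I_r ∨ K_r ∨ (K_{n-3r-1} + I_{r+1})` on `Fin n`: vertices `< r` form the
independent set `I_r`, vertices in `[r, 2r)` form the clique `K_r`, vertices in `[2r, n-r-1)`
form the clique `K_{n-3r-1}`, and vertices in `[n-r-1, n)` form the independent set `I_{r+1}`;
all join edges are present except between `K_{n-3r-1}` and `I_{r+1}`. -/
def extremalGraph (n r : ℕ) : SimpleGraph (Fin n) where
  Adj u v := u ≠ v ∧ ¬((u : ℕ) < r ∧ (v : ℕ) < r) ∧
    ¬(n - r - 1 ≤ (u : ℕ) ∧ n - r - 1 ≤ (v : ℕ)) ∧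
    ¬((2 * r ≤ (u : ℕ) ∧ (u : ℕ) < n - r - 1) ∧ n - r - 1 ≤ (v : ℕ)) ∧
    ¬((2 * r ≤ (v : ℕ) ∧ (v : ℕ) < n - r - 1) ∧ n - r - 1 ≤ (u : ℕ))
  symm := ⟨fun u v ⟨h1, h2, h3, h4, h5⟩ =>
    ⟨h1.symm, fun h => h2 ⟨h.2, h.1⟩, fun h => h3 ⟨h.2, h.1⟩, h5, h4⟩⟩
  loopless := ⟨fun v h => h.1 rfl⟩

open Matrix
open scoped MatrixOrder

namespace Matrix

variable {ι : Type*} [Fintype ι] [DecidableEq ι]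

theorem setOf_exists_mulVec_eq_smul_eq_spectrum (M : Matrix ι ι ℝ) :
    {t : ℝ | ∃ x : ι → ℝ, x ≠ 0 ∧ M *ᵥ x = t • x} = spectrum ℝ M := by
  ext t
  rw [← AlgEquiv.spectrum_eq toLinAlgEquiv' M, Set.mem_ofPred_eq,
    ← Module.End.hasEigenvalue_iff_mem_spectrum]
  constructor
  · rintro ⟨x, hx, hMx⟩
    exact Module.End.hasEigenvalue_of_hasEigenvector
      ⟨Module.End.mem_eigenspace_iff.mpr (by simpa using hMx), hx⟩
  · intro h
    obtain ⟨x, hx⟩ := h.exists_hasEigenvector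
    exact ⟨x, hx.2, by simpa using Module.End.mem_eigenspace_iff.mp hx.1⟩

theorem IsHermitian.dotProduct_mulVec_le {M : Matrix ι ι ℝ} (hM : M.IsHermitian) (x : ι → ℝ) :
    x ⬝ᵥ M *ᵥ x ≤ sSup (spectrum ℝ M) * (x ⬝ᵥ x) := by
  have hle : M ≤ algebraMap ℝ _ (sSup (spectrum ℝ M)) :=
    le_algebraMap_of_spectrum_le (fun t ht => le_csSup M.finite_real_spectrum.bddAbove ht) hM
  have := (Matrix.le_iff.mp hle).dotProduct_mulVec_nonneg x
  rwa [Algebra.algebraMap_eq_smul_one, sub_mulVec, smul_mulVec, one_mulVec, star_trivial,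
    dotProduct_sub, dotProduct_smul, smul_eq_mul, sub_nonneg] at this

end Matrix

namespace SimpleGraph

variable {V : Type*} {G : SimpleGraph V} [DecidableRel G.Adj]

theorem Connected.two_le_dist_add_ite_adj (hG : G.Connected) {u v : V} (huv : u ≠ v) :
    2 ≤ G.dist u v + if G.Adj u v then 1 else 0 := by
  by_cases hadj : G.Adj u v
  · rw [if_pos hadj]
    exact Nat.succ_le_succ (hG.pos_dist_of_ne huv)
  · rw [if_neg hadj]
    exact hG.one_lt_dist_of_ne_of_not_adj huv hadj

variable [Fintype V] [DecidableEq V]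

theorem Connected.two_mul_card_mul_card_sub_one_le_sum_dist_add (hG : G.Connected) :
    2 * (Fintype.card V * (Fintype.card V - 1)) ≤ ∑ u, ∑ v, G.dist u v + 2 * #G.edgeFinset := by
  have hdiag (u : V) : ∑ v, (if u = v then 0 else 2) = 2 * (Fintype.card V - 1) := by
    simp [Finset.sum_ite, Finset.filter_ne, mul_comm]
  calc 2 * (Fintype.card V * (Fintype.card V - 1))
      = ∑ u : V, ∑ v, if u = v then 0 else 2 := by simp [hdiag, mul_left_comm]
    _ ≤ ∑ u, ∑ v, (G.dist u v + if G.Adj u v then 1 else 0) := by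
      gcongr with u _ v _
      by_cases huv : u = v
      · simp [huv]
      · simpa [huv] using hG.two_le_dist_add_ite_adj huv
    _ = ∑ u, ∑ v, G.dist u v + ∑ u, G.degree u := by
      simp [Finset.sum_add_distrib, Finset.sum_boole, ← neighborFinset_eq_filter]
    _ = ∑ u, ∑ v, G.dist u v + 2 * #G.edgeFinset := by rw [sum_degrees_eq_twice_card_edges]

end SimpleGraph

theorem specMax_eq_sSup_spectrum {n : ℕ} (M : Matrix (Fin n) (Fin n) ℝ) :
    specMax M = sSup (spectrum ℝ M) := by
  rw [specMax, setOf_exists_mulVec_eq_smul_eq_spectrum]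

theorem distSignlessLapMatrix_isHermitian {n : ℕ} (G : SimpleGraph (Fin n)) :
    (distSignlessLapMatrix G).IsHermitian :=
  (isHermitian_diagonal _).add <| IsHermitian.ext fun u v => by
    simp [distMatrix, SimpleGraph.dist_comm]

theorem one_dotProduct_distSignlessLapMatrix_mulVec_one {n : ℕ} (G : SimpleGraph (Fin n)) :
    1 ⬝ᵥ distSignlessLapMatrix G *ᵥ 1 = 2 * ∑ u, ∑ v, (G.dist u v : ℝ) := by
  have hrow (u : Fin n) : ∑ v, distSignlessLapMatrix G u v = 2 * ∑ v, (G.dist u v : ℝ) := by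
    simp [distSignlessLapMatrix, distMatrix, transmission, diagonal_apply, Finset.sum_add_distrib,
      two_mul]
  simp only [mulVec, dotProduct, Pi.one_apply, one_mul, mul_one, hrow, Finset.mul_sum]

/-- For every connected graph `G` of order `n` with `e(G)` edges,
`μ₁(D^Q(G)) ≥ 4(n-1) - 4e(G)/n`. -/
theorem stmt_18 {n : ℕ} (G : SimpleGraph (Fin n)) (hconn : G.Connected) :
    4 * ((n : ℝ) - 1) - 4 * (G.edgeFinset.card : ℝ) / n ≤
      specMax (distSignlessLapMatrix G) := by
  have hn : 0 < n := Fin.pos hconn.nonempty.some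
  have hrayleigh := (distSignlessLapMatrix_isHermitian G).dotProduct_mulVec_le 1
  rw [one_dotProduct_distSignlessLapMatrix_mulVec_one, ← specMax_eq_sSup_spectrum,
    one_dotProduct_one, Fintype.card_fin] at hrayleigh
  have hwiener := (Nat.cast_le (α := ℝ)).mpr hconn.two_mul_card_mul_card_sub_one_le_sum_dist_add
  push_cast [Fintype.card_fin, Nat.cast_sub hn] at hwiener
  rw [sub_le_iff_le_add, ← sub_le_iff_le_add', le_div_iff₀ (by exact_mod_cast hn)]
  linarith
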